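/- Let e1, e2 ∈ {0, 1, …, N−1} with e1 < e2 and suppose e1 + e2 ≡ 1 (mod N). For every odd shift τ = 2τ0 + 1 with 0 ≤ τ0 ≤ N−1, the periodic cross-correlation of S^{e1} and S^{e2} satisfies: R_{S^{e1},S^{e2}}(2τ0+1) = −2N if τ0 ≡ −e2 − N/2 (mod N); R_{S^{e1},S^{e2}}(2τ0+1) = −2N1 if τ0 ≡ −e2 (mod N); and R_{S^{e1},S^{e2}}(2τ0+1) = −2N2 otherwise. -/

import Mathlib

/-- The geometric sequence of the first type: `t¹ₙ = 1` iff the Legendre symbol of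
`Tr(ω^n)` is `-1`, and `0` otherwise (i.e. when the symbol is `0` or `1`). -/
noncomputable def ntuT1 (p : ℕ) [Fact p.Prime] {F : Type} [Field F]
    [Algebra (ZMod p) F] (ω : F) (n : ℕ) : ZMod 2 :=
  if legendreSym p ((Algebra.trace (ZMod p) F (ω ^ n)).val : ℤ) = -1 then 1 else 0

/-- The geometric sequence of the second type: `t²ₙ = 0` iff the Legendre symbol of
`Tr(ω^n)` is `1`, and `1` otherwise (i.e. when the symbol is `0` or `-1`). -/
noncomputable def ntuT2 (p : ℕ) [Fact p.Prime] {F : Type} [Field F]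
    [Algebra (ZMod p) F] (ω : F) (n : ℕ) : ZMod 2 :=
  if legendreSym p ((Algebra.trace (ZMod p) F (ω ^ n)).val : ℤ) = 1 then 0 else 1

/-- Periodic cross-correlation at shift `τ` of two `N`-periodic binary sequences:
`R_{s,s'}(τ) = Σ_{i=0}^{N-1} (-1)^{s_i + s'_{i+τ}}`, indices taken modulo `N`. -/
def pcorr (N : ℕ) (s s' : ℕ → ZMod 2) (τ : ℤ) : ℤ :=
  ∑ i ∈ Finset.range N, (-1 : ℤ) ^ ((s i + s' ((((i : ℤ) + τ) % (N : ℤ)).toNat)).val)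

/-- The interleaved sequence of `t` and the left shift by `e` of `u`:
`n = 2j ↦ t j`, `n = 2j+1 ↦ u (j + e)`. -/
def ntuInterleave (t u : ℕ → ZMod 2) (e : ℕ) (n : ℕ) : ZMod 2 :=
  if n % 2 = 0 then t (n / 2) else u (n / 2 + e)

/-!
Write `χ x = η (Tr x)`, with `η` the quadratic character of `𝔽_p`, and `d = N / 2`. The element
`ω ^ d` generates `𝔽_pˣ`, so it is a non-square `a ∈ 𝔽_p`, and
`χ (ω ^ (n + N) x) = η (a²) χ (ω ^ n x)`: both sequences have period `N`. At the odd shift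
`2 τ₀ + 1` the even terms of `S^{e₁}` meet `t²` shifted by `c = τ₀ + e₂`, and the odd terms meet
`t¹` shifted by `τ₀ + 1 - e₁ ≡ c`, so the correlation is `∑_{j < N} w (ω ^ j)` with
`w x = 2 χ x χ (x β) - 2 [Tr x = Tr (x β) = 0]` and `β = ω ^ c`. Since `w` is invariant under the
squares of `𝔽_pˣ`, `(p - 1) / 2` copies of this sum make up the sum of `w` over `Fˣ`, a character
sum over `F`. If `β ∈ 𝔽_p` (that is, `d ∣ c`), only `Tr x` matters and `η β = (-1) ^ (c / d)`;
otherwise `x ↦ (Tr x, Tr (x β))` maps `F` onto `𝔽_p²`, with fibres of size `p ^ (m - 2)`.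
-/

open Finset Function

lemma Function.Periodic.eq_of_modEq {α : Type*} {f : ℕ → α} {N : ℕ} (hf : Periodic f N)
    {a b : ℕ} (h : a ≡ b [MOD N]) : f a = f b := by
  rw [← hf.map_mod_nat a, ← hf.map_mod_nat b, h]

lemma Function.Periodic.sum_range_add_const {M : Type*} [AddCommMonoid M] {f : ℕ → M} {N : ℕ}
    (hf : Periodic f N) (k : ℕ) : ∑ j ∈ range N, f (j + k) = ∑ j ∈ range N, f j := by
  induction k with
  | zero => rfl
  | succ k ih =>
    rw [← ih]
    cases N with
    | zero => rfl
    | succ N =>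
      rw [sum_range_succ, sum_range_succ', show N + (k + 1) = k + (N + 1) by omega, hf, zero_add]
      simp only [add_right_comm _ 1 k, add_assoc]

lemma Function.Periodic.sum_range_mul {M : Type*} [AddCommMonoid M] {f : ℕ → M} {N : ℕ}
    (hf : Periodic f N) (K : ℕ) : ∑ j ∈ range (K * N), f j = K • ∑ j ∈ range N, f j := by
  induction K with
  | zero => simp
  | succ K ih =>
    rw [add_one_mul, Finset.sum_range_add, ih, succ_nsmul]
    congr 1
    exact sum_congr rfl fun j _ => by simpa [add_comm] using hf.nat_mul K j

lemma sum_range_two_mul {M : Type*} [AddCommMonoid M] (f : ℕ → M) (n : ℕ) :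
    ∑ i ∈ range (2 * n), f i = ∑ j ∈ range n, (f (2 * j) + f (2 * j + 1)) := by
  induction n with
  | zero => simp
  | succ n ih => rw [mul_add_one, sum_range_succ, sum_range_succ, sum_range_succ, ih, add_assoc]

lemma pcorr_natCast_of_periodic {N : ℕ} (s : ℕ → ZMod 2) {s' : ℕ → ZMod 2} (hs' : Periodic s' N)
    (k : ℕ) : pcorr N s s' k = ∑ i ∈ range N, (-1 : ℤ) ^ (s i + s' (i + k)).val := by
  refine sum_congr rfl fun i _ => ?_
  rw [← Nat.cast_add, ← Int.natCast_mod, Int.toNat_natCast, hs'.map_mod_nat]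

section Interleave

variable (t u : ℕ → ZMod 2)

@[simp]
lemma ntuInterleave_two_mul (e j : ℕ) : ntuInterleave t u e (2 * j) = t j := by
  simp [ntuInterleave]

@[simp]
lemma ntuInterleave_two_mul_add_one (e j : ℕ) : ntuInterleave t u e (2 * j + 1) = u (j + e) := by
  simp [ntuInterleave, Nat.add_div]

variable {t u} {N : ℕ}

lemma Function.Periodic.ntuInterleave (ht : Periodic t N) (hu : Periodic u N) (e : ℕ) :
    Periodic (ntuInterleave t u e) (2 * N) := by
  intro n
  unfold _root_.ntuInterleave
  rw [show (n + 2 * N) / 2 = n / 2 + N by omega, show (n + 2 * N) % 2 = n % 2 by omega, ht,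
    add_right_comm, hu]

lemma pcorr_ntuInterleave_two_mul_add_one (ht : Periodic t N) (hu : Periodic u N) {e₁ e₂ : ℕ}
    (he : e₁ + e₂ ≡ 1 [MOD N]) (τ : ℕ) :
    pcorr (2 * N) (ntuInterleave t u e₁) (ntuInterleave t u e₂) (2 * (τ : ℤ) + 1) =
      ∑ j ∈ range N, ((-1 : ℤ) ^ (t j + u (j + (τ + e₂))).val +
        (-1 : ℤ) ^ (u j + t (j + (τ + e₂))).val) := by
  have hv : Periodic (fun j => (-1 : ℤ) ^ (u j + t (j + (τ + e₂))).val) N := fun j => by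
    simp only [add_right_comm j N, hu j, ht _]
  rw [show 2 * (τ : ℤ) + 1 = ((2 * τ + 1 : ℕ) : ℤ) by push_cast; ring,
    pcorr_natCast_of_periodic _ (ht.ntuInterleave hu e₂), sum_range_two_mul, sum_add_distrib,
    sum_add_distrib, ← hv.sum_range_add_const e₁]
  congr 1 <;> refine sum_congr rfl fun j _ => ?_
  · rw [show 2 * j + (2 * τ + 1) = 2 * (j + τ) + 1 by ring, ntuInterleave_two_mul,
      ntuInterleave_two_mul_add_one, add_assoc]
  · rw [show 2 * j + 1 + (2 * τ + 1) = 2 * (j + τ + 1) by ring, ntuInterleave_two_mul,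
      ntuInterleave_two_mul_add_one, ht.eq_of_modEq (b := j + e₁ + (τ + e₂))]
    rw [show j + e₁ + (τ + e₂) = j + τ + (e₁ + e₂) by ring]
    exact he.symm.add_left _

end Interleave

lemma AddMonoidHom.card_nsmul_sum_comp_of_surjective {G H M : Type*} [AddGroup G] [Fintype G]
    [AddGroup H] [Fintype H] [AddCommMonoid M] (φ : G →+ H) (hφ : Surjective φ) (g : H → M) :
    Fintype.card H • ∑ x, g (φ x) = Fintype.card G • ∑ y, g y := by
  classical
  have hfiber (y : H) : #{x | φ x = y} = #{x | φ x = 0} :=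
    AddMonoidHom.card_fiber_eq_of_mem_range φ (hφ y) (hφ 0)
  have hcard : Fintype.card G = Fintype.card H * #{x | φ x = 0} := by
    rw [← card_univ, card_eq_sum_card_fiberwise (t := univ) fun x _ => mem_coe.2 (mem_univ (φ x))]
    simp [hfiber]
  rw [sum_comp, image_univ_of_surjective hφ, hcard, mul_nsmul']
  simp only [hfiber, ← smul_sum]

section TraceCharacter

variable (p : ℕ) [Fact p.Prime] {F : Type} [Field F] [Algebra (ZMod p) F]

noncomputable def traceChi (x : F) : ℤ := quadraticChar (ZMod p) (Algebra.trace (ZMod p) F x)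

lemma legendreSym_val (a : ZMod p) : legendreSym p (a.val : ℤ) = quadraticChar (ZMod p) a := by
  simp [legendreSym]

lemma ntuT1_eq (ω : F) (n : ℕ) : ntuT1 p ω n = if traceChi p (ω ^ n) = -1 then 1 else 0 := by
  rw [ntuT1, legendreSym_val, traceChi]

lemma ntuT2_eq (ω : F) (n : ℕ) : ntuT2 p ω n = if traceChi p (ω ^ n) = 1 then 0 else 1 := by
  rw [ntuT2, legendreSym_val, traceChi]

lemma traceChi_eq_zero_iff (x : F) : traceChi p x = 0 ↔ Algebra.trace (ZMod p) F x = 0 :=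
  quadraticChar_eq_zero_iff

lemma traceChi_trichotomy (x : F) : traceChi p x = 0 ∨ traceChi p x = 1 ∨ traceChi p x = -1 := by
  by_cases h : Algebra.trace (ZMod p) F x = 0
  · exact .inl ((traceChi_eq_zero_iff p x).2 h)
  · exact .inr (quadraticChar_dichotomy h)

lemma trace_mul_algebraMap (x : F) (b : ZMod p) :
    Algebra.trace (ZMod p) F (x * algebraMap (ZMod p) F b) = b * Algebra.trace (ZMod p) F x := by
  rw [mul_comm, ← Algebra.smul_def, map_smul, smul_eq_mul]

lemma traceChi_mul_algebraMap (x : F) (b : ZMod p) :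
    traceChi p (x * algebraMap (ZMod p) F b) = quadraticChar (ZMod p) b * traceChi p x := by
  rw [traceChi, traceChi, trace_mul_algebraMap, map_mul]

lemma traceChi_zero : traceChi p (0 : F) = 0 := by
  rw [traceChi_eq_zero_iff, map_zero]

noncomputable def pairWeight (β x : F) : ℤ :=
  2 * (traceChi p x * traceChi p (x * β)) -
    2 * if traceChi p x = 0 ∧ traceChi p (x * β) = 0 then 1 else 0

/-- Writing `σ₁ a = a + [a = 0]` and `σ₂ a = a - [a = 0]` for the signs `(-1)^t¹` and `(-1)^t²`
at a term with `traceChi = a`, the left side is `σ₁ a σ₂ b + σ₂ a σ₁ b = 2ab - 2[a = 0][b = 0]`. -/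
lemma neg_one_pow_ntuT_add_ntuT (ω : F) (j c : ℕ) :
    (-1 : ℤ) ^ (ntuT1 p ω j + ntuT2 p ω (j + c)).val +
      (-1 : ℤ) ^ (ntuT2 p ω j + ntuT1 p ω (j + c)).val = pairWeight p (ω ^ c) (ω ^ j) := by
  rw [ntuT1_eq, ntuT2_eq, ntuT1_eq, ntuT2_eq, pairWeight, pow_add]
  rcases traceChi_trichotomy p (ω ^ j) with ha | ha | ha <;>
    rcases traceChi_trichotomy p (ω ^ j * ω ^ c) with hb | hb | hb <;>
    simp only [ha, hb] <;> decide

lemma pairWeight_mul_algebraMap_sq {a : ZMod p} (ha : quadraticChar (ZMod p) a = -1) (β x : F) :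
    pairWeight p β (x * algebraMap (ZMod p) F (a ^ 2)) = pairWeight p β x := by
  have hsq : quadraticChar (ZMod p) (a ^ 2) = 1 := by rw [map_pow, ha]; norm_num
  rw [pairWeight, mul_right_comm, traceChi_mul_algebraMap, traceChi_mul_algebraMap, hsq, one_mul,
    one_mul, pairWeight]

lemma pairWeight_zero (β : F) : pairWeight p β 0 = -2 := by
  simp [pairWeight, traceChi_zero]

lemma mem_range_algebraMap_iff_pow_eq_self (x : F) :
    x ∈ Set.range (algebraMap (ZMod p) F) ↔ x ^ p = x := by
  have := charP_of_injective_algebraMap' (ZMod p) (A := F) p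
  rw [← Subfield.mem_bot_iff_pow_eq_self F p]
  constructor
  · rintro ⟨a, rfl⟩
    rw [← ZMod.natCast_zmod_val a, map_natCast]
    exact natCast_mem _ _
  · exact fun h => (bot_le : ⊥ ≤ (algebraMap (ZMod p) F).fieldRange) h

variable {ω : F} {d : ℕ} {a : ZMod p}

lemma traceChi_pow_add_two_mul (ha : algebraMap (ZMod p) F a = ω ^ d)
    (haχ : quadraticChar (ZMod p) a = -1) (n : ℕ) :
    traceChi p (ω ^ (n + 2 * d)) = traceChi p (ω ^ n) := by
  rw [pow_add, pow_mul', ← ha, ← map_pow, traceChi_mul_algebraMap, map_pow, haχ]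
  norm_num

lemma ntuT1_periodic (ha : algebraMap (ZMod p) F a = ω ^ d)
    (haχ : quadraticChar (ZMod p) a = -1) : Periodic (ntuT1 p ω) (2 * d) := fun n => by
  simp only [ntuT1_eq, traceChi_pow_add_two_mul p ha haχ]

lemma ntuT2_periodic (ha : algebraMap (ZMod p) F a = ω ^ d)
    (haχ : quadraticChar (ZMod p) a = -1) : Periodic (ntuT2 p ω) (2 * d) := fun n => by
  simp only [ntuT2_eq, traceChi_pow_add_two_mul p ha haχ]

end TraceCharacter

section TraceSums

variable (p : ℕ) [Fact p.Prime] {F : Type} [Field F] [Fintype F] [Algebra (ZMod p) F]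

lemma sum_quadraticChar_mul_self :
    ∑ u : ZMod p, quadraticChar (ZMod p) u * quadraticChar (ZMod p) u = (p : ℤ) - 1 := by
  have (u : ZMod p) :
      quadraticChar (ZMod p) u * quadraticChar (ZMod p) u = if u = 0 then 0 else 1 := by
    split_ifs with hu
    · simp [hu]
    · rw [← map_mul, ← sq, quadraticChar_sq_one' hu]
  simp only [this]
  simp [Finset.sum_ite, Finset.filter_ne', ZMod.card, Nat.cast_sub (Fact.out : p.Prime).one_le]

lemma sum_traceChi_mul_traceChi_mul_algebraMap (b : ZMod p) :
    p * ∑ x : F, traceChi p x * traceChi p (x * algebraMap (ZMod p) F b) =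
      quadraticChar (ZMod p) b * (Fintype.card F * ((p : ℤ) - 1)) := by
  have := (Algebra.trace (ZMod p) F).toAddMonoidHom.card_nsmul_sum_comp_of_surjective
    (Algebra.trace_surjective (ZMod p) F)
    (fun u => quadraticChar (ZMod p) u * (quadraticChar (ZMod p) b * quadraticChar (ZMod p) u))
  simp only [ZMod.card, nsmul_eq_mul] at this
  simp_rw [traceChi_mul_algebraMap]
  refine this.trans ?_
  simp only [← sum_quadraticChar_mul_self p, mul_sum]
  exact sum_congr rfl fun u _ => by ring

lemma card_mul_card_trace_eq_zero :
    p * #{x : F | Algebra.trace (ZMod p) F x = 0} = Fintype.card F := by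
  classical
  have := (Algebra.trace (ZMod p) F).toAddMonoidHom.card_nsmul_sum_comp_of_surjective
    (Algebra.trace_surjective (ZMod p) F) (fun u => if u = 0 then 1 else 0)
  rwa [ZMod.card, sum_ite_eq' univ (0 : ZMod p), if_pos (mem_univ _), smul_eq_mul, smul_eq_mul,
    mul_one, ← Finset.card_filter] at this

lemma mul_card_trace_eq_zero_and_trace_mul_algebraMap_eq_zero {b : ZMod p} (hb : b ≠ 0) :
    p * #{x : F | Algebra.trace (ZMod p) F x = 0 ∧
      Algebra.trace (ZMod p) F (x * algebraMap (ZMod p) F b) = 0} = Fintype.card F := by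
  simp only [trace_mul_algebraMap, mul_eq_zero, hb, false_or, and_self]
  exact card_mul_card_trace_eq_zero p

lemma sum_pairWeight (β : F) :
    ∑ x, pairWeight p β x = 2 * ∑ x, traceChi p x * traceChi p (x * β) -
      2 * #{x : F | Algebra.trace (ZMod p) F x = 0 ∧ Algebra.trace (ZMod p) F (x * β) = 0} := by
  classical
  simp only [pairWeight, traceChi_eq_zero_iff, sum_sub_distrib, ← mul_sum, sum_boole]

noncomputable def tracePair (β : F) : F →ₗ[ZMod p] ZMod p × ZMod p :=
  (Algebra.trace (ZMod p) F).prod (Algebra.trace (ZMod p) F ∘ₗ LinearMap.mulRight (ZMod p) β)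

lemma tracePair_surjective {β : F} (hβ : β ∉ Set.range (algebraMap (ZMod p) F)) :
    Surjective (tracePair p β) := by
  -- A functional `(u, v) ↦ λ u + μ v` killing the image gives `Tr ((λ + μ β) x) = 0` for all `x`.
  rw [← LinearMap.dualMap_injective_iff, injective_iff_map_eq_zero]
  intro φ hφ
  have hφ_apply (u v : ZMod p) : φ (u, v) = u * φ (1, 0) + v * φ (0, 1) := by
    rw [← smul_eq_mul, ← smul_eq_mul, ← map_smul, ← map_smul, ← map_add, Prod.smul_mk, Prod.smul_mk]
    simp
  have hker : ∀ x : F, Algebra.traceForm (ZMod p) F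
      (algebraMap (ZMod p) F (φ (1, 0)) + β * algebraMap (ZMod p) F (φ (0, 1))) x = 0 := by
    intro x
    have := LinearMap.congr_fun hφ x
    rw [LinearMap.dualMap_apply, tracePair, LinearMap.prod_apply, hφ_apply] at this
    simp only [Function.prod, LinearMap.coe_comp, comp_apply, LinearMap.mulRight_apply,
      LinearMap.zero_apply] at this
    rw [Algebra.traceForm_apply, add_mul, map_add, mul_comm, trace_mul_algebraMap, mul_right_comm,
      mul_comm β, trace_mul_algebraMap]
    linear_combination this
  have h := (traceForm_nondegenerate (ZMod p) F).1 _ hker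
  have hμ : φ (0, 1) = 0 := by
    by_contra hμ
    refine hβ ⟨-φ (1, 0) / φ (0, 1), ?_⟩
    rw [map_div₀, map_neg, div_eq_iff ((map_ne_zero (algebraMap (ZMod p) F)).2 hμ)]
    linear_combination -h
  have hl : φ (1, 0) = 0 := by
    rwa [hμ, map_zero, mul_zero, add_zero, map_eq_zero] at h
  exact LinearMap.ext fun ⟨u, v⟩ => by rw [hφ_apply, hl, hμ, LinearMap.zero_apply]; ring

variable {β : F}

lemma sum_traceChi_mul_traceChi_mul_eq_zero (hp2 : p ≠ 2)
    (hβ : β ∉ Set.range (algebraMap (ZMod p) F)) :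
    ∑ x : F, traceChi p x * traceChi p (x * β) = 0 := by
  have := (tracePair p β).toAddMonoidHom.card_nsmul_sum_comp_of_surjective
    (tracePair_surjective p hβ) (fun w => quadraticChar (ZMod p) w.1 * quadraticChar (ZMod p) w.2)
  rw [Fintype.sum_prod_type, ← sum_mul_sum,
    quadraticChar_sum_zero (by rwa [ZMod.ringChar_zmod_n]), zero_mul, smul_zero, Fintype.card_prod,
    ZMod.card, smul_eq_zero] at this
  exact this.resolve_left (mul_ne_zero (Fact.out : p.Prime).ne_zero (Fact.out : p.Prime).ne_zero)

lemma sq_mul_card_trace_eq_zero_and_trace_mul_eq_zero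
    (hβ : β ∉ Set.range (algebraMap (ZMod p) F)) :
    p ^ 2 * #{x : F | Algebra.trace (ZMod p) F x = 0 ∧ Algebra.trace (ZMod p) F (x * β) = 0} =
      Fintype.card F := by
  classical
  have := (tracePair p β).toAddMonoidHom.card_nsmul_sum_comp_of_surjective
    (tracePair_surjective p hβ) (fun w => if w = 0 then 1 else 0)
  rw [sum_ite_eq' univ (0 : ZMod p × ZMod p), if_pos (mem_univ _), smul_eq_mul, smul_eq_mul,
    mul_one, Fintype.card_prod, ZMod.card, ← sq] at this
  rw [Finset.card_filter, ← this]
  simp [tracePair, Prod.ext_iff]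

end TraceSums

lemma ne_zero_of_orderOf_eq_card_sub_one {F : Type*} [Field F] [Fintype F] {ω : F}
    (hω : orderOf ω = Fintype.card F - 1) : ω ≠ 0 := by
  rintro rfl
  have := pow_orderOf_eq_one (0 : F)
  rw [hω, zero_pow (by have := Fintype.one_lt_card (α := F); omega)] at this
  exact zero_ne_one this

lemma sum_range_card_sub_one_pow {F M : Type*} [Field F] [Fintype F] [AddCommGroup M] {ω : F}
    (hω : orderOf ω = Fintype.card F - 1) (g : F → M) :
    ∑ j ∈ range (Fintype.card F - 1), g (ω ^ j) = ∑ x, g x - g 0 := by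
  classical
  have hω0 := ne_zero_of_orderOf_eq_card_sub_one hω
  have hinj : Set.InjOn (ω ^ ·) (range (Fintype.card F - 1)) := by
    rw [coe_range, ← hω]
    exact pow_injOn_Iio_orderOf
  have himage : (range (Fintype.card F - 1)).image (ω ^ ·) = univ.erase 0 := by
    refine eq_of_subset_of_card_le (fun y hy => ?_) ?_
    · obtain ⟨j, -, rfl⟩ := mem_image.1 hy
      exact mem_erase.2 ⟨pow_ne_zero j hω0, mem_univ _⟩
    · rw [card_image_of_injOn hinj, card_erase_of_mem (mem_univ _), card_univ, card_range]
  rw [← sum_image hinj, himage, sum_erase_eq_sub (mem_univ _)]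

section Generator

variable (p : ℕ) [Fact p.Prime] {F : Type} [Field F] [Fintype F] [Algebra (ZMod p) F] {ω : F}
  {d : ℕ}

lemma pow_mem_range_algebraMap_iff (hω : orderOf ω = Fintype.card F - 1)
    (hd : (p - 1) * d = Fintype.card F - 1) (c : ℕ) :
    ω ^ c ∈ Set.range (algebraMap (ZMod p) F) ↔ d ∣ c := by
  have hp := (Fact.out : p.Prime).one_lt
  have hω0 : ω ^ c ≠ 0 := pow_ne_zero c (ne_zero_of_orderOf_eq_card_sub_one hω)
  rw [mem_range_algebraMap_iff_pow_eq_self, ← Nat.sub_add_cancel hp.le, pow_succ,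
    mul_eq_right₀ hω0, ← pow_mul, ← orderOf_dvd_iff_pow_eq_one, hω, ← hd, mul_comm c,
    Nat.mul_dvd_mul_iff_left (by omega)]

lemma exists_algebraMap_eq_pow_quadraticChar_eq_neg_one (hp2 : p ≠ 2)
    (hω : orderOf ω = Fintype.card F - 1) (hd : (p - 1) * d = Fintype.card F - 1) :
    ∃ a : ZMod p, algebraMap (ZMod p) F a = ω ^ d ∧ quadraticChar (ZMod p) a = -1 := by
  obtain ⟨a, ha⟩ := (pow_mem_range_algebraMap_iff p hω hd d).2 dvd_rfl
  refine ⟨a, ha, ?_⟩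
  have hp3 : 3 ≤ p := by have := (Fact.out : p.Prime).two_le; omega
  have hd0 : 0 < d := by
    have := Fintype.one_lt_card (α := F)
    exact Nat.pos_of_ne_zero fun h => by rw [h, mul_zero] at hd; omega
  have ha0 : a ≠ 0 := by
    rintro rfl
    exact pow_ne_zero d (ne_zero_of_orderOf_eq_card_sub_one hω) (by rw [← ha, map_zero])
  rw [quadraticChar_neg_one_iff_not_isSquare, ZMod.euler_criterion p ha0]
  intro hsq
  have hdvd : orderOf ω ∣ d * (p / 2) :=
    orderOf_dvd_of_pow_eq_one (by rw [pow_mul, ← ha, ← map_pow, hsq, map_one])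
  rw [hω, ← hd] at hdvd
  have := Nat.le_of_dvd (Nat.mul_pos hd0 (by omega)) hdvd
  have : d * (p / 2) < (p - 1) * d := by
    rw [mul_comm]; exact Nat.mul_lt_mul_of_pos_right (by omega) hd0
  omega

variable {a : ZMod p}

lemma sub_one_mul_sum_range_pairWeight (hp2 : p ≠ 2) (hω : orderOf ω = Fintype.card F - 1)
    (hd : (p - 1) * d = Fintype.card F - 1) (ha : algebraMap (ZMod p) F a = ω ^ d)
    (haχ : quadraticChar (ZMod p) a = -1) (β : F) :
    ((p : ℤ) - 1) * ∑ j ∈ range (2 * d), pairWeight p β (ω ^ j) =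
      4 * ∑ x, traceChi p x * traceChi p (x * β) - 4 *
        #{x : F | Algebra.trace (ZMod p) F x = 0 ∧ Algebra.trace (ZMod p) F (x * β) = 0} + 4 := by
  have hp := (Fact.out : p.Prime)
  obtain ⟨k, hk⟩ : ∃ k, p - 1 = 2 * k := ⟨p / 2, by have := hp.eq_two_or_odd; omega⟩
  have hper : Periodic (fun j => pairWeight p β (ω ^ j)) (2 * d) := fun j => by
    simp only [pow_add, pow_mul', ← ha, ← map_pow, pairWeight_mul_algebraMap_sq p haχ]
  have hsum := hper.sum_range_mul k
  rw [show k * (2 * d) = Fintype.card F - 1 by rw [← hd, hk]; ring, sum_range_card_sub_one_pow hω,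
    pairWeight_zero, sum_pairWeight, nsmul_eq_mul] at hsum
  have hk' : (p : ℤ) - 1 = 2 * k := by have := hp.one_lt; omega
  rw [hk', mul_assoc, ← hsum]
  ring

lemma mul_sub_one_mul_sum_range_pairWeight_algebraMap (hp2 : p ≠ 2)
    (hω : orderOf ω = Fintype.card F - 1) (hd : (p - 1) * d = Fintype.card F - 1)
    (ha : algebraMap (ZMod p) F a = ω ^ d) (haχ : quadraticChar (ZMod p) a = -1) {b : ZMod p}
    (hb : b ≠ 0) :
    p * (((p : ℤ) - 1) * ∑ j ∈ range (2 * d), pairWeight p (algebraMap (ZMod p) F b) (ω ^ j)) =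
      4 * (quadraticChar (ZMod p) b * Fintype.card F * ((p : ℤ) - 1) - Fintype.card F + p) := by
  have hA := sum_traceChi_mul_traceChi_mul_algebraMap p (F := F) b
  have hB := congrArg ((↑) : ℕ → ℤ)
    (mul_card_trace_eq_zero_and_trace_mul_algebraMap_eq_zero p (F := F) hb)
  rw [Nat.cast_mul] at hB
  rw [sub_one_mul_sum_range_pairWeight p hp2 hω hd ha haχ]
  linear_combination 4 * hA - 4 * hB

lemma sq_mul_sub_one_mul_sum_range_pairWeight_of_notMem (hp2 : p ≠ 2)
    (hω : orderOf ω = Fintype.card F - 1) (hd : (p - 1) * d = Fintype.card F - 1)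
    (ha : algebraMap (ZMod p) F a = ω ^ d) (haχ : quadraticChar (ZMod p) a = -1) {β : F}
    (hβ : β ∉ Set.range (algebraMap (ZMod p) F)) :
    p ^ 2 * (((p : ℤ) - 1) * ∑ j ∈ range (2 * d), pairWeight p β (ω ^ j)) =
      4 * (p ^ 2 - Fintype.card F) := by
  have hB := congrArg ((↑) : ℕ → ℤ) (sq_mul_card_trace_eq_zero_and_trace_mul_eq_zero p hβ)
  rw [Nat.cast_mul, Nat.cast_pow] at hB
  rw [sub_one_mul_sum_range_pairWeight p hp2 hω hd ha haχ,
    sum_traceChi_mul_traceChi_mul_eq_zero p hp2 hβ]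
  linear_combination -4 * hB

end Generator

lemma sub_one_mul_sum_range_neg_one_pow_ntuT (p : ℕ) [Fact p.Prime] (hp2 : p ≠ 2) {m : ℕ}
    (hm : 1 < m) {F : Type} [Field F] [Fintype F] [Algebra (ZMod p) F]
    (hcard : Fintype.card F = p ^ m) {ω : F} (hω : orderOf ω = p ^ m - 1) {d : ℕ}
    (hd : (p - 1) * d = p ^ m - 1) {a : ZMod p} (ha : algebraMap (ZMod p) F a = ω ^ d)
    (haχ : quadraticChar (ZMod p) a = -1) (c : ℕ) :
    ((p : ℤ) - 1) * ∑ j ∈ range (2 * d), ((-1 : ℤ) ^ (ntuT1 p ω j + ntuT2 p ω (j + c)).val +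
        (-1 : ℤ) ^ (ntuT2 p ω j + ntuT1 p ω (j + c)).val) =
      if 2 * d ∣ c + d then -4 * ((p : ℤ) ^ m - 1)
      else if 2 * d ∣ c then 4 * ((p : ℤ) ^ (m - 1) * ((p : ℤ) - 1) - ((p : ℤ) ^ (m - 1) - 1))
      else -4 * ((p : ℤ) ^ (m - 2) - 1) := by
  rw [← hcard] at hω hd
  have hp0 : (p : ℤ) ≠ 0 := by exact_mod_cast (Fact.out : p.Prime).ne_zero
  have hd0 : 0 < d := Nat.pos_of_ne_zero <| by
    rintro rfl
    have := Fintype.one_lt_card (α := F)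
    omega
  simp only [neg_one_pow_ntuT_add_ntuT]
  by_cases hdc : d ∣ c
  · obtain ⟨j, rfl⟩ := hdc
    have ha0 : a ≠ 0 := by rintro rfl; simp at haχ
    have h := mul_sub_one_mul_sum_range_pairWeight_algebraMap p hp2 hω hd ha haχ (pow_ne_zero j ha0)
    rw [map_pow (algebraMap (ZMod p) F), ha, ← pow_mul, map_pow (quadraticChar (ZMod p)), haχ,
      hcard, Nat.cast_pow] at h
    apply mul_left_cancel₀ hp0
    rcases Nat.even_or_odd j with ⟨k, rfl⟩ | ⟨k, rfl⟩
    · have hndvd : ¬2 * d ∣ d * (k + k) + d := by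
        rw [show d * (k + k) + d = 2 * d * k + d by ring, Nat.dvd_add_right (dvd_mul_right _ _)]
        exact fun h => by have := Nat.le_of_dvd hd0 h; omega
      have hpm : (p : ℤ) * p ^ (m - 1) = p ^ m := by rw [← pow_succ']; congr 1; omega
      rw [if_neg hndvd, if_pos ⟨k, by ring⟩]
      rw [Even.neg_one_pow ⟨k, rfl⟩] at h
      linear_combination h + (8 - 4 * (p : ℤ)) * hpm
    · rw [if_pos ⟨k + 1, by ring⟩]
      rw [Odd.neg_one_pow ⟨k, rfl⟩] at h
      linear_combination h
  · have hβ : ω ^ c ∉ Set.range (algebraMap (ZMod p) F) :=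
      mt (pow_mem_range_algebraMap_iff p hω hd c).1 hdc
    have h := sq_mul_sub_one_mul_sum_range_pairWeight_of_notMem p hp2 hω hd ha haχ hβ
    rw [hcard, Nat.cast_pow] at h
    have hpm : (p : ℤ) ^ 2 * p ^ (m - 2) = p ^ m := by rw [← pow_add]; congr 1; omega
    rw [if_neg fun h => hdc ((Nat.dvd_add_left (dvd_refl d)).1 (dvd_trans (dvd_mul_left d 2) h)),
      if_neg fun h => hdc (dvd_trans (dvd_mul_left d 2) h)]
    apply mul_left_cancel₀ (pow_ne_zero 2 hp0)
    linear_combination h + 4 * hpm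

lemma Int.natCast_modEq_neg_natCast_iff {a b n : ℕ} : (a : ℤ) ≡ -(b : ℤ) [ZMOD n] ↔ n ∣ a + b := by
  rw [Int.modEq_iff_dvd, show -(b : ℤ) - a = -((a + b : ℕ) : ℤ) by push_cast; ring, dvd_neg,
    Int.natCast_dvd_natCast]

lemma Int.sub_one_mul_two_mul_pow_sub_one_ediv (x : ℤ) (k : ℕ) :
    (x - 1) * (2 * (x ^ k - 1) / (x - 1)) = 2 * (x ^ k - 1) :=
  Int.mul_ediv_cancel' ((sub_one_dvd_pow_sub_one x k).mul_left 2)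

theorem stmt15_general (p m : ℕ) [Fact p.Prime] (hp2 : p ≠ 2) (hm : 1 < m)
    (F : Type) [Field F] [Fintype F] [Algebra (ZMod p) F]
    (hcard : Fintype.card F = p ^ m) (ω : F) (hω : orderOf ω = p ^ m - 1)
    (N : ℕ) (hN : N = 2 * (p ^ m - 1) / (p - 1)) (N1 N2 : ℤ)
    (hN1 : N1 = -2 * (p : ℤ) ^ (m - 1) + 2 * ((p : ℤ) ^ (m - 1) - 1) / ((p : ℤ) - 1))
    (hN2 : N2 = 2 * ((p : ℤ) ^ (m - 2) - 1) / ((p : ℤ) - 1))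
    (e1 e2 : ℕ)
    (hcond : (e1 : ℤ) + (e2 : ℤ) ≡ 1 [ZMOD (N : ℤ)])
    (τ0 : ℤ) (hτ0 : 0 ≤ τ0) :
    pcorr (2 * N) (ntuInterleave (ntuT1 p ω) (ntuT2 p ω) e1) (ntuInterleave (ntuT1 p ω) (ntuT2 p ω) e2) (2 * τ0 + 1) =
      if τ0 ≡ -(e2 : ℤ) - ((N / 2 : ℕ) : ℤ) [ZMOD (N : ℤ)] then -2 * (N : ℤ)
      else if τ0 ≡ -(e2 : ℤ) [ZMOD (N : ℤ)] then -2 * N1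
      else -2 * N2 := by
  have hp := (Fact.out : p.Prime)
  obtain ⟨d, hd⟩ := Nat.sub_one_dvd_pow_sub_one p m
  obtain rfl : N = 2 * d := by
    rw [hN, hd, mul_left_comm, Nat.mul_div_cancel_left _ (by have := hp.two_le; omega)]
  lift τ0 to ℕ using hτ0
  obtain ⟨a, ha, haχ⟩ :=
    exists_algebraMap_eq_pow_quadraticChar_eq_neg_one p hp2 (hcard ▸ hω) (hcard ▸ hd.symm)
  have hdZ : (p : ℤ) ^ m - 1 = ((p : ℤ) - 1) * d := by
    have := congrArg ((↑) : ℕ → ℤ) hd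
    rwa [Nat.cast_sub (Nat.one_le_pow _ _ hp.pos), Nat.cast_mul, Nat.cast_sub hp.one_le,
      Nat.cast_pow, Nat.cast_one] at this
  rw [pcorr_ntuInterleave_two_mul_add_one (ntuT1_periodic p ha haχ) (ntuT2_periodic p ha haχ)
    (Int.natCast_modEq_iff.1 (by exact_mod_cast hcond)) τ0,
    Nat.mul_div_cancel_left d two_pos, show -(e2 : ℤ) - d = -((e2 + d : ℕ) : ℤ) by push_cast; ring]
  apply mul_left_cancel₀ (sub_ne_zero.2 (by exact_mod_cast hp.one_lt.ne' : (p : ℤ) ≠ 1))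
  rw [sub_one_mul_sum_range_neg_one_pow_ntuT p hp2 hm hcard hω hd.symm ha haχ]
  simp only [Int.natCast_modEq_neg_natCast_iff, add_assoc]
  split_ifs
  · push_cast
    linear_combination -4 * hdZ
  · rw [hN1]
    linear_combination 2 * Int.sub_one_mul_two_mul_pow_sub_one_ediv (p : ℤ) (m - 1)
  · rw [hN2]
    linear_combination 2 * Int.sub_one_mul_two_mul_pow_sub_one_ediv (p : ℤ) (m - 2)

theorem stmt15 (p m : ℕ) [Fact p.Prime] (hp2 : p ≠ 2) (hm : 1 < m)
    (F : Type) [Field F] [Fintype F] [Algebra (ZMod p) F]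
    (hcard : Fintype.card F = p ^ m) (ω : F) (hω : orderOf ω = p ^ m - 1)
    (N : ℕ) (hN : N = 2 * (p ^ m - 1) / (p - 1)) (N1 N2 : ℤ)
    (hN1 : N1 = -2 * (p : ℤ) ^ (m - 1) + 2 * ((p : ℤ) ^ (m - 1) - 1) / ((p : ℤ) - 1))
    (hN2 : N2 = 2 * ((p : ℤ) ^ (m - 2) - 1) / ((p : ℤ) - 1))
    (e1 e2 : ℕ) (he1 : e1 < N) (he2 : e2 < N) (hlt : e1 < e2)
    (hcond : (e1 : ℤ) + (e2 : ℤ) ≡ 1 [ZMOD (N : ℤ)])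
    (τ0 : ℤ) (hτ0 : 0 ≤ τ0) (hτ1 : τ0 ≤ (N : ℤ) - 1) :
    pcorr (2 * N) (ntuInterleave (ntuT1 p ω) (ntuT2 p ω) e1) (ntuInterleave (ntuT1 p ω) (ntuT2 p ω) e2) (2 * τ0 + 1) =
      if τ0 ≡ -(e2 : ℤ) - ((N / 2 : ℕ) : ℤ) [ZMOD (N : ℤ)] then -2 * (N : ℤ)
      else if τ0 ≡ -(e2 : ℤ) [ZMOD (N : ℤ)] then -2 * N1
      else -2 * N2 :=
  stmt15_general p m hp2 hm F hcard ω hω N hN N1 N2 hN1 hN2 e1 e2 hcond τ0 hτ0
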